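/- arXiv:2304.07582 — 2 statements merged into one kernel-verified Lean document; each statement's English description precedes it below -/
import Mathlib

section
/- Let G be a countable locally finite group, A a finite alphabet, X ⊆ A^G a G-SFT, and Y ⊆ A^G a nonempty G-shift with Y ⊊ X (proper subset). Let {F_n} be a Følner sequence for G, and suppose log|L_{F_n}(X)| / |F_n| → h_X and log|L_{F_n}(Y)| / |F_n| → h_Y for real numbers h_X, h_Y. Then h_Y < h_X; that is, every G-SFT over a countable locally finite group is entropy minimal. -/
open scoped Pointwise symmDiff

namespace LFPaper

variable {G A B : Type*}

/-- The right shift action: `(shift g x) h = x (h * g)`. -/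
def shift [Group G] (g : G) (x : G → A) : G → A := fun h => x (h * g)

/-- Restriction of a configuration to a finite shape. -/
def restrictF (F : Finset G) (x : G → A) : F → A := fun a => x a

/-- A `G`-shift space: a closed, shift-invariant subset of the full shift. -/
def IsShiftSpace [Group G] [TopologicalSpace A] (X : Set (G → A)) : Prop :=
  IsClosed X ∧ ∀ g : G, ∀ x ∈ X, shift g x ∈ X

/-- A `G`-shift of finite type: the set of configurations avoiding a finite
set of forbidden patterns on a finite shape. -/
def IsSFT [Group G] (X : Set (G → A)) : Prop :=
  ∃ (F : Finset G) (P : Set (F → A)),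
    X = {x : G → A | ∀ g : G, restrictF F (shift g x) ∉ P}

/-- The `F`-language of `X`: all restrictions of elements of `X` to `F`. -/
def language (X : Set (G → A)) (F : Finset G) : Set (F → A) :=
  {w | ∃ x ∈ X, restrictF F x = w}

/-- Strong irreducibility of a shift. -/
def StronglyIrreducible [Group G] (X : Set (G → A)) : Prop :=
  ∃ K : Finset G, ∀ (Fu Fv : Finset G) (u : Fu → A) (v : Fv → A),
    Disjoint (Fu : Set G) ((K : Set G) * (Fv : Set G)) →
    u ∈ language X Fu → v ∈ language X Fv →
    ∃ x ∈ X, restrictF Fu x = u ∧ restrictF Fv x = v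

/-- The free `G`-extension of an `H`-shift `Y`: all configurations whose
restriction to every right coset of `H` (pulled back to `H`) lies in `Y`. -/
def freeExt [Group G] (H : Subgroup G) (Y : Set (H → A)) : Set (G → A) :=
  {x : G → A | ∀ g : G, (fun h : H => x ((h : G) * g)) ∈ Y}

/-- Local finiteness of a group: every finitely generated subgroup is finite. -/
def IsLocallyFinite (G : Type*) [Group G] : Prop :=
  ∀ S : Finset G, Finite ↥(Subgroup.closure (S : Set G))

/-- A (left) Følner sequence for a countable group. -/
def IsFolner [Group G] (F : ℕ → Finset G) : Prop :=
  (∀ n, (F n).Nonempty) ∧ (∀ g : G, ∃ n, g ∈ F n) ∧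
  ∀ g : G, Filter.Tendsto
    (fun n => (Set.ncard ((((fun h => g * h) '' (F n : Set G))) ∆ ((F n : Set G))) : ℝ) /
      ((F n).card : ℝ))
    Filter.atTop (nhds 0)

/-- Cardinality of the `F`-language. -/
noncomputable def langCard (X : Set (G → A)) (F : Finset G) : ℕ :=
  (language X F).ncard

/-- A shift-commuting self-homeomorphism of `X` (an automorphism of the shift `X`). -/
def IsAutomorphism [Group G] [TopologicalSpace A] (X : Set (G → A)) (φ : Equiv.Perm X) : Prop :=
  Continuous φ ∧ Continuous φ.symm ∧
  ∀ (g : G) (x y : X), (y : G → A) = shift g (x : G → A) →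
    (φ y : G → A) = shift g ((φ x : G → A))


/-!
Pick `y₀ ∈ X \ Y`. Since `Y` is closed, some finite window `E` already excludes `y₀`'s pattern
from `Y`. In a locally finite group, `E` and the window of the SFT generate a finite subgroup `K`;
then `X` is the free extension of its set `W` of `K`-coset patterns, while every `K`-coset pattern
of a point of `Y` lies in `W` minus the pattern of `y₀`. A Følner set `T` is, up to a boundary of
size `o(|T|)`, a union of `c` right `K`-cosets with `c * |K| ≈ |T|`. Choosing coset patterns
independently gives `|L_T(X)| ≥ |W| ^ c`, and `|L_T(Y)| ≤ (|W| - 1) ^ c * |A| ^ o(|T|)`, so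
`h(X) - h(Y) ≥ (log |W| - log (|W| - 1)) / |K| > 0`.
-/

open Filter Topology

lemma _root_.IsClosed.exists_finset_eqOn_notMem [TopologicalSpace A] [DiscreteTopology A]
    {Y : Set (G → A)} (hY : IsClosed Y) {y₀ : G → A} (hy₀ : y₀ ∉ Y) :
    ∃ E : Finset G, ∀ y : G → A, Set.EqOn y y₀ E → y ∉ Y := by
  obtain ⟨E, u, hu, hsub⟩ := isOpen_pi_iff.mp hY.isOpen_compl y₀ hy₀
  refine ⟨E, fun y hy => hsub fun a ha => ?_⟩
  rw [hy ha]
  exact (hu a ha).2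

section CosetPattern

variable [Group G] (K : Subgroup G)

lemma shift_shift (g g' : G) (x : G → A) : shift g' (shift g x) = shift (g' * g) x := by
  funext h
  simp [shift, mul_assoc]

def cosetPattern (x : G → A) (g : G) : K → A := fun k => x (k * g)

def cosetLanguage (X : Set (G → A)) : Set (K → A) := (cosetPattern K · 1) '' X

variable {K}

lemma mem_freeExt_iff {W : Set (K → A)} {x : G → A} :
    x ∈ freeExt K W ↔ ∀ g, cosetPattern K x g ∈ W :=
  Iff.rfl

lemma cosetPattern_shift (x : G → A) (g h : G) :
    cosetPattern K (shift g x) h = cosetPattern K x (h * g) := by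
  funext k
  simp [cosetPattern, shift, mul_assoc]

lemma shift_mem_freeExt {W : Set (K → A)} {x : G → A} (hx : x ∈ freeExt K W) (g : G) :
    shift g x ∈ freeExt K W := fun h => by
  show cosetPattern K (shift g x) h ∈ W
  rw [cosetPattern_shift]
  exact hx (h * g)

lemma IsSFT.exists_finset_eq_freeExt {X : Set (G → A)} (hX : IsSFT X) :
    ∃ F₀ : Finset G, ∀ K : Subgroup G, (F₀ : Set G) ⊆ K →
      X = freeExt K (cosetLanguage K X) := by
  obtain ⟨F₀, P, rfl⟩ := hX
  refine ⟨F₀, fun K hF₀K => Set.Subset.antisymm (fun x hx g => ?_) fun x hx g => ?_⟩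
  · refine ⟨shift g x, fun g' => ?_, ?_⟩
    · rw [shift_shift]
      exact hx _
    · show cosetPattern K (shift g x) 1 = cosetPattern K x g
      rw [cosetPattern_shift, one_mul]
  · obtain ⟨x', hx', hxx'⟩ := hx g
    have : restrictF F₀ (shift g x) = restrictF F₀ (shift 1 x') := funext fun f => by
      simpa [cosetPattern, restrictF, shift] using (congrFun hxx' ⟨f, hF₀K f.2⟩).symm
    exact this ▸ hx' 1

lemma subset_freeExt_diff_singleton {Y : Set (G → A)} (hY : ∀ g, ∀ y ∈ Y, shift g y ∈ Y)
    {W : Set (K → A)} (hYW : Y ⊆ freeExt K W) {E : Finset G} (hEK : (E : Set G) ⊆ K)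
    {y₀ : G → A} (hy₀ : ∀ y : G → A, Set.EqOn y y₀ E → y ∉ Y) :
    Y ⊆ freeExt K (W \ {cosetPattern K y₀ 1}) := by
  refine fun y hy g => ⟨hYW hy g, fun hg => hy₀ (shift g y) (fun a ha => ?_) (hY g y hy)⟩
  simpa [cosetPattern, shift] using congrFun hg ⟨a, hEK ha⟩

end CosetPattern

section Cosets

variable [Group G]

open Classical in
noncomputable def boundary (S : Set G) (T : Finset G) : Finset G :=
  T.filter fun a => ∃ k ∈ S, k * a ∉ T

lemma mem_boundary {S : Set G} {T : Finset G} {a : G} :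
    a ∈ boundary S T ↔ a ∈ T ∧ ∃ k ∈ S, k * a ∉ T := by
  classical
  simp [boundary]

lemma card_boundary_le {S : Set G} (hS : S.Finite) (T : Finset G) :
    (boundary S T).card ≤
      ∑ k ∈ hS.toFinset, (((fun h => k * h) '' (T : Set G)) ∆ (T : Set G)).ncard := by
  classical
  have hsub : boundary S T ⊆ hS.toFinset.biUnion fun k => T.filter fun a => k * a ∉ T := by
    intro a ha
    obtain ⟨haT, k, hk, hka⟩ := mem_boundary.mp ha
    exact Finset.mem_biUnion.mpr
      ⟨k, hS.mem_toFinset.mpr hk, Finset.mem_filter.mpr ⟨haT, hka⟩⟩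
  refine (Finset.card_le_card hsub).trans (Finset.card_biUnion_le.trans
    (Finset.sum_le_sum fun k _ => ?_))
  have hfin : (((fun h => k * h) '' (T : Set G)) ∆ (T : Set G)).Finite :=
    ((T.finite_toSet.image _).union T.finite_toSet).subset Set.symmDiff_subset_union
  rw [← Set.ncard_coe_finset, ← Set.ncard_image_of_injective _ (mul_right_injective k)]
  refine Set.ncard_le_ncard ?_ hfin
  rintro _ ⟨a, ha, rfl⟩
  obtain ⟨haT, hka⟩ := Finset.mem_filter.mp ha
  exact Or.inl ⟨⟨a, haT, rfl⟩, hka⟩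

lemma IsFolner.tendsto_card_boundary_div {F : ℕ → Finset G} (hF : IsFolner F) {S : Set G}
    (hS : S.Finite) :
    Tendsto (fun n => ((boundary S (F n)).card : ℝ) / (F n).card) atTop (𝓝 0) := by
  have hsum := tendsto_finsetSum hS.toFinset fun k _ => hF.2.2 k
  rw [Finset.sum_const_zero] at hsum
  refine squeeze_zero (fun n => by positivity) (fun n => ?_) hsum
  rw [← Finset.sum_div]
  gcongr
  exact_mod_cast card_boundary_le hS (F n)

variable (K : Subgroup G)

open Classical in
/-- The right cosets of `K` contained in `T`. -/
noncomputable def innerCosets (T : Finset G) : Finset (Quotient (QuotientGroup.rightRel K)) :=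
  (T \ boundary K T).image (Quotient.mk _)

variable {K}

lemma mk_eq_mk_iff {a b : G} :
    Quotient.mk (QuotientGroup.rightRel K) a = Quotient.mk _ b ↔ b * a⁻¹ ∈ K :=
  Quotient.eq.trans QuotientGroup.rightRel_apply

lemma mk_mul_of_mem {k : G} (hk : k ∈ K) (g : G) :
    Quotient.mk (QuotientGroup.rightRel K) (k * g) = Quotient.mk _ g :=
  mk_eq_mk_iff.mpr (by simpa using K.inv_mem hk)

lemma mul_inv_out_mk_mem (g : G) : g * (Quotient.mk (QuotientGroup.rightRel K) g).out⁻¹ ∈ K :=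
  mk_eq_mk_iff.mp (Quotient.out_eq _)

lemma mk_mem_innerCosets {T : Finset G} {a : G} (ha : a ∈ T) (hab : a ∉ boundary K T) :
    Quotient.mk _ a ∈ innerCosets K T := by
  classical
  exact Finset.mem_image_of_mem _ (Finset.mem_sdiff.mpr ⟨ha, hab⟩)

lemma mul_out_mem_of_mem_innerCosets {T : Finset G} {q : Quotient (QuotientGroup.rightRel K)}
    (hq : q ∈ innerCosets K T) {k : G} (hk : k ∈ K) : k * q.out ∈ T := by
  classical
  obtain ⟨a, ha, rfl⟩ := Finset.mem_image.mp hq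
  obtain ⟨haT, hab⟩ := Finset.mem_sdiff.mp ha
  have hout : (Quotient.mk _ a).out * a⁻¹ ∈ K := mk_eq_mk_iff.mp (Quotient.out_eq _).symm
  have hinterior : ∀ k ∈ K, k * a ∈ T := by simpa [mem_boundary, haT] using hab
  simpa [mul_assoc] using hinterior _ (K.mul_mem hk hout)

lemma card_le_card_innerCosets_mul_add [Finite K] (T : Finset G) :
    T.card ≤ (innerCosets K T).card * Nat.card K + (boundary K T).card := by
  classical
  have := Fintype.ofFinite K
  have hsub : T ⊆ (innerCosets K T).biUnion
      (fun q => Finset.univ.image fun k : K => (k : G) * q.out) ∪ boundary K T := by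
    intro a ha
    by_cases hab : a ∈ boundary K T
    · exact Finset.mem_union_right _ hab
    · refine Finset.mem_union_left _
        (Finset.mem_biUnion.mpr ⟨_, mk_mem_innerCosets ha hab, ?_⟩)
      exact Finset.mem_image.mpr ⟨⟨_, mul_inv_out_mk_mem a⟩, Finset.mem_univ _, by simp⟩
  refine (Finset.card_le_card hsub).trans ((Finset.card_union_le _ _).trans ?_)
  gcongr
  refine Finset.card_biUnion_le.trans ((Finset.sum_le_card_nsmul _ _ (Nat.card K) fun q _ => ?_))
  exact Finset.card_image_le.trans (Nat.card_eq_fintype_card (α := K)).ge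

end Cosets

section Counting

variable [Group G] {K : Subgroup G}

lemma glue_mem_freeExt {W : Set (K → A)} {b : Quotient (QuotientGroup.rightRel K) → G → A}
    (hb : ∀ q, b q ∈ freeExt K W) : (fun g => b (Quotient.mk _ g) g) ∈ freeExt K W := by
  refine mem_freeExt_iff.mpr fun g => ?_
  convert hb (Quotient.mk _ g) g using 1
  funext k
  simp only [cosetPattern, mk_mul_of_mem k.2]

lemma ncard_cosetLanguage_pow_le_langCard [Finite A] [Finite K] {X : Set (G → A)}
    {W : Set (K → A)} (hX : X = freeExt K W) (hne : X.Nonempty) (T : Finset G) :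
    (cosetLanguage K X).ncard ^ (innerCosets K T).card ≤ langCard X T := by
  classical
  obtain ⟨x₀, hx₀⟩ := hne
  choose xw hxwX hxw using fun p : cosetLanguage K X => p.2
  let base (φ : innerCosets K T → cosetLanguage K X) (q : Quotient (QuotientGroup.rightRel K)) :
      G → A :=
    if hq : q ∈ innerCosets K T then shift q.out⁻¹ (xw (φ ⟨q, hq⟩)) else x₀
  let glue (φ : innerCosets K T → cosetLanguage K X) : G → A :=
    fun g => base φ (Quotient.mk _ g) g
  have glue_mem φ : glue φ ∈ X := by
    subst hX
    refine glue_mem_freeExt fun q => ?_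
    by_cases hq : q ∈ innerCosets K T
    · simpa [base, hq] using shift_mem_freeExt (hxwX (φ ⟨q, hq⟩)) q.out⁻¹
    · simpa [base, hq] using hx₀
  have glue_apply φ (q : innerCosets K T) (k : K) :
      glue φ (k * q.1.out) = (φ q : K → A) k := by
    have hk := mk_mul_of_mem k.2 q.1.out
    simpa [glue, base, hk, shift, cosetPattern] using congrFun (hxw (φ q)) k
  let restrictGlue (φ : innerCosets K T → cosetLanguage K X) : language X T :=
    ⟨restrictF T (glue φ), glue φ, glue_mem φ, rfl⟩
  have hinj : Function.Injective restrictGlue := fun φ ψ h => funext fun q => Subtype.ext <|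
    funext fun k => by
      have := congrFun (congrArg Subtype.val h) ⟨_, mul_out_mem_of_mem_innerCosets q.2 k.2⟩
      simpa only [restrictGlue, restrictF, glue_apply] using this
  have := Nat.card_le_card_of_injective restrictGlue hinj
  rwa [Nat.card_fun, Nat.card_coe_set_eq, Nat.card_eq_finsetCard, Nat.card_coe_set_eq] at this

lemma langCard_le_of_subset_freeExt [Finite A] [Finite K] {Y : Set (G → A)} {V : Set (K → A)}
    (hY : Y ⊆ freeExt K V) (T : Finset G) :
    langCard Y T ≤ V.ncard ^ (innerCosets K T).card * Nat.card A ^ (boundary K T).card := by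
  classical
  let recon (p : (innerCosets K T → V) × (boundary K T → A)) : T → A := fun a =>
    if ha : a.1 ∈ boundary K T then p.2 ⟨a, ha⟩
    else (p.1 ⟨_, mk_mem_innerCosets a.2 ha⟩ : K → A) ⟨_, mul_inv_out_mk_mem a.1⟩
  have hrange : language Y T ⊆ Set.range recon := by
    rintro _ ⟨y, hy, rfl⟩
    refine ⟨(fun q => ⟨cosetPattern K y q.1.out, hY hy _⟩, fun a => y a),
      funext fun a => ?_⟩
    by_cases ha : a.1 ∈ boundary K T <;> simp [recon, ha, cosetPattern, restrictF]
  calc langCard Y T ≤ Nat.card (Set.range recon) :=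
        (Set.ncard_le_ncard hrange (Set.toFinite _)).trans_eq (Nat.card_coe_set_eq _).symm
    _ ≤ _ := Finite.card_range_le recon
    _ = _ := by
      rw [Nat.card_prod, Nat.card_fun, Nat.card_fun, Nat.card_coe_set_eq, Nat.card_eq_finsetCard,
        Nat.card_eq_finsetCard]

end Counting

section Entropy

variable [Group G] [Finite A] {K : Subgroup G} [Finite K] {X Y : Set (G → A)}
  {W V : Set (K → A)}

theorem le_log_langCard_sub_log_langCard_div (hX : X = freeExt K W) (hY : Y ⊆ freeExt K V)
    (hYne : Y.Nonempty) (hVX : V.ncard < (cosetLanguage K X).ncard) {T : Finset G}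
    (hT : T.Nonempty) :
    (1 - (boundary K T).card / T.card) / Nat.card K *
        (Real.log (cosetLanguage K X).ncard - Real.log V.ncard) -
      (boundary K T).card / T.card * Real.log (Nat.card A) ≤
      (Real.log (langCard X T) - Real.log (langCard Y T)) / T.card := by
  obtain ⟨y, hy⟩ := hYne
  have : Nonempty A := ⟨y 1⟩
  have ha : 0 < Nat.card A := Nat.card_pos
  have hV : 0 < V.ncard := (Set.ncard_pos (Set.toFinite _)).mpr ⟨_, hY hy 1⟩
  have hXne : X.Nonempty :=
    Set.image_nonempty.mp ((Set.ncard_pos (Set.toFinite _)).mp (hV.trans hVX))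
  have hcover : (T.card : ℝ) ≤ (innerCosets K T).card * Nat.card K + (boundary K T).card := by
    exact_mod_cast card_le_card_innerCosets_mul_add T
  have hXT : (innerCosets K T).card * Real.log (cosetLanguage K X).ncard ≤
      Real.log (langCard X T) := by
    rw [← Real.log_pow]
    exact Real.log_le_log (pow_pos (by exact_mod_cast hV.trans hVX) _)
      (by exact_mod_cast ncard_cosetLanguage_pow_le_langCard hX hXne T)
  have hYT : Real.log (langCard Y T) ≤
      (innerCosets K T).card * Real.log V.ncard + (boundary K T).card * Real.log (Nat.card A) := by
    have hpos : 0 < langCard Y T := (Set.ncard_pos (Set.toFinite _)).mpr ⟨_, y, hy, rfl⟩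
    rw [← Real.log_pow, ← Real.log_pow, ← Real.log_mul (by positivity) (by positivity)]
    exact Real.log_le_log (by exact_mod_cast hpos)
      (by exact_mod_cast langCard_le_of_subset_freeExt hY T)
  have ht : (0 : ℝ) < T.card := by exact_mod_cast hT.card_pos
  have hm : (0 : ℝ) < Nat.card K := by exact_mod_cast Nat.card_pos
  have hδ : 0 ≤ Real.log (cosetLanguage K X).ncard - Real.log V.ncard :=
    sub_nonneg.mpr (Real.log_le_log (by exact_mod_cast hV) (by exact_mod_cast hVX.le))
  generalize (T.card : ℝ) = t at *
  generalize ((innerCosets K T).card : ℝ) = c at *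
  generalize ((boundary K T).card : ℝ) = d at *
  generalize hδ_def : Real.log (cosetLanguage K X).ncard - Real.log V.ncard = δ at *
  have hgap : c * δ - d * Real.log (Nat.card A) ≤
      Real.log (langCard X T) - Real.log (langCard Y T) := by
    rw [← hδ_def, mul_sub]
    linarith
  have hc : (t - d) / Nat.card K ≤ c := by rw [div_le_iff₀ hm]; linarith
  calc (1 - d / t) / Nat.card K * δ - d / t * Real.log (Nat.card A)
      = ((t - d) / Nat.card K * δ - d * Real.log (Nat.card A)) / t := by field_simp
    _ ≤ (c * δ - d * Real.log (Nat.card A)) / t := by gcongr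
    _ ≤ _ := div_le_div_of_nonneg_right hgap ht.le

theorem entropy_lt_of_subset_freeExt (hX : X = freeExt K W) (hY : Y ⊆ freeExt K V)
    (hYne : Y.Nonempty) (hVX : V.ncard < (cosetLanguage K X).ncard)
    {F : ℕ → Finset G} (hF : IsFolner F) {hX' hY' : ℝ}
    (hentX : Tendsto (fun n => Real.log (langCard X (F n)) / (F n).card) atTop (𝓝 hX'))
    (hentY : Tendsto (fun n => Real.log (langCard Y (F n)) / (F n).card) atTop (𝓝 hY')) :
    hY' < hX' := by
  set δ := Real.log (cosetLanguage K X).ncard - Real.log V.ncard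
  have hδ : 0 < δ := by
    obtain ⟨y, hy⟩ := hYne
    have hV : 0 < V.ncard := (Set.ncard_pos (Set.toFinite _)).mpr ⟨_, hY hy 1⟩
    exact sub_pos.mpr (Real.log_lt_log (by exact_mod_cast hV) (by exact_mod_cast hVX))
  have hβ := hF.tendsto_card_boundary_div (Set.toFinite (K : Set G))
  have hlim := (((tendsto_const_nhds (x := (1 : ℝ)).sub hβ).div_const
    (Nat.card K : ℝ)).mul_const δ).sub (hβ.mul_const (Real.log (Nat.card A)))
  rw [sub_zero, zero_mul, sub_zero] at hlim
  have hgap := le_of_tendsto_of_tendsto' hlim (hentX.sub hentY) fun n =>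
    (le_log_langCard_sub_log_langCard_div hX hY hYne hVX (hF.1 n)).trans_eq (sub_div _ _ _)
  have : 0 < 1 / (Nat.card K : ℝ) * δ :=
    mul_pos (one_div_pos.mpr (by exact_mod_cast Nat.card_pos)) hδ
  linarith

end Entropy

theorem SFT_entropy_minimal_of_locallyFinite_general [Group G] (hLF : IsLocallyFinite G)
    [Fintype A] [TopologicalSpace A] [DiscreteTopology A]
    (X : Set (G → A)) (hX : IsSFT X)
    (Y : Set (G → A)) (hYshift : IsShiftSpace Y) (hYne : Y.Nonempty) (hYX : Y ⊂ X)
    (F : ℕ → Finset G) (hF : IsFolner F) (hX' hY' : ℝ)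
    (hentX : Filter.Tendsto
      (fun n => Real.log (langCard X (F n)) / ((F n).card : ℝ)) Filter.atTop (nhds hX'))
    (hentY : Filter.Tendsto
      (fun n => Real.log (langCard Y (F n)) / ((F n).card : ℝ)) Filter.atTop (nhds hY')) :
    hY' < hX' := by
  classical
  obtain ⟨F₀, hF₀⟩ := hX.exists_finset_eq_freeExt
  obtain ⟨y₀, hy₀X, hy₀Y⟩ := Set.exists_of_ssubset hYX
  obtain ⟨E, hE⟩ := hYshift.1.exists_finset_eqOn_notMem hy₀Y
  let K := Subgroup.closure ((E ∪ F₀ : Finset G) : Set G)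
  have : Finite K := hLF (E ∪ F₀)
  have hEK : (E : Set G) ⊆ K := fun a ha => Subgroup.subset_closure (by simp [ha])
  have hXK : X = freeExt K (cosetLanguage K X) :=
    hF₀ K fun a ha => Subgroup.subset_closure (by simp [ha])
  have hYK : Y ⊆ freeExt K (cosetLanguage K X \ {cosetPattern K y₀ 1}) :=
    subset_freeExt_diff_singleton hYshift.2 (hXK ▸ hYX.1) hEK hE
  exact entropy_lt_of_subset_freeExt hXK hYK hYne
    (Set.ncard_sdiff_singleton_lt_of_mem ⟨y₀, hy₀X, rfl⟩) hF hentX hentY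

/-- Over a countable locally finite group, every `G`-SFT is entropy minimal:
any proper nonempty subshift has strictly smaller entropy. -/
theorem SFT_entropy_minimal_of_locallyFinite [Group G] [Countable G] (hLF : IsLocallyFinite G)
    [Fintype A] [Nonempty A] [TopologicalSpace A] [DiscreteTopology A]
    (X : Set (G → A)) (hX : IsSFT X)
    (Y : Set (G → A)) (hYshift : IsShiftSpace Y) (hYne : Y.Nonempty) (hYX : Y ⊂ X)
    (F : ℕ → Finset G) (hF : IsFolner F) (hX' hY' : ℝ)
    (hentX : Filter.Tendsto
      (fun n => Real.log (langCard X (F n)) / ((F n).card : ℝ)) Filter.atTop (nhds hX'))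
    (hentY : Filter.Tendsto
      (fun n => Real.log (langCard Y (F n)) / ((F n).card : ℝ)) Filter.atTop (nhds hY')) :
    hY' < hX' :=
  SFT_entropy_minimal_of_locallyFinite_general hLF X hX Y hYshift hYne hYX F hF hX' hY' hentX hentY

end LFPaper
end

section
/- Let G be a countable locally finite group and {F_n} a Følner sequence for G. For a real number r, the following are equivalent: (i) there exist a finite alphabet A and a nonempty G-SFT X ⊆ A^G such that log|L_{F_n}(X)| / |F_n| → r; (ii) there exist a finite subgroup H ≤ G and a natural number n ≥ 1 such that r = log(n) / |H|, where |H| is the cardinality of H. In other words, the set of topological entropies of G-SFTs is exactly { log(n)/|H| : H a finite subgroup of G, n ∈ ℕ, n ≥ 1 }. -/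
open scoped Pointwise symmDiff

namespace LFPaper

variable {G A B : Type*}

/-!
An SFT `X` with window `S` only constrains a configuration on the right cosets of
`H = ⟨S⟩`, which is finite by local finiteness; so `X` is the free extension of an
`H`-invariant set `Y ⊆ A^H`. A pattern of `X` on `F` is determined by its values on the cosets
meeting `F` and can be chosen freely on the cosets contained in `F`, whence
`|Y| ^ #(cosets ⊆ F) ≤ |L_F(X)| ≤ |Y| ^ #(cosets meeting F)`. Both unions of cosets differ from
`F` only inside `⋃_{h ∈ H} (hF ∆ F)`, which is `o(|F|)` along a Følner sequence, so the entropy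
is `log |Y| / |H|`. Conversely, forcing configurations over `Fin n` to be constant on the cosets
of a finite `H` gives an SFT with `|Y| = n`.
-/

open Filter Topology
open scoped Finset

section CosetRep

variable [Group G] (H : Subgroup G)

noncomputable def cosetRep (g : G) : G := (Quotient.mk (QuotientGroup.rightRel H) g).out

lemma mul_inv_cosetRep_mem (g : G) : g * (cosetRep H g)⁻¹ ∈ H :=
  QuotientGroup.rightRel_apply.mp (Quotient.mk_out (s := QuotientGroup.rightRel H) g)

lemma cosetRep_mul_inv_mem (g : G) : cosetRep H g * g⁻¹ ∈ H := by
  simpa using H.inv_mem (mul_inv_cosetRep_mem H g)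

lemma cosetRep_mul {h : G} (hh : h ∈ H) (g : G) : cosetRep H (h * g) = cosetRep H g :=
  congrArg Quotient.out <| Quotient.sound <|
    QuotientGroup.rightRel_apply.mpr (by simpa using H.inv_mem hh)

lemma cosetRep_cosetRep (g : G) : cosetRep H (cosetRep H g) = cosetRep H g := by
  simpa using cosetRep_mul H (cosetRep_mul_inv_mem H g) g

end CosetRep

section Counting

variable [Group G] [DecidableEq G]

def leftBoundary (K F : Finset G) : Finset G := K.biUnion fun g => F.image (g * ·) ∆ F

lemma IsFolner.tendsto_card_leftBoundary_div {F : ℕ → Finset G} (hF : IsFolner F)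
    (K : Finset G) :
    Tendsto (fun n => (#(leftBoundary K (F n)) : ℝ) / #(F n)) atTop (𝓝 0) := by
  have hterm : ∀ g ∈ K, Tendsto (fun n => (#((F n).image (g * ·) ∆ F n) : ℝ) / #(F n))
      atTop (𝓝 0) := fun g _ => by
    simpa only [← Finset.coe_image, ← Finset.coe_symmDiff, Set.ncard_coe_finset] using hF.2.2 g
  have hsum := tendsto_finsetSum K hterm
  rw [Finset.sum_const_zero] at hsum
  refine squeeze_zero (fun n => by positivity) (fun n => ?_) hsum
  rw [← Finset.sum_div]
  gcongr
  exact_mod_cast Finset.card_biUnion_le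

variable (H : Subgroup G) [Fintype H]

def cosetClosure (F : Finset G) : Finset G :=
  Finset.univ.biUnion fun h : H => F.image ((h : G) * ·)

def cosetInterior (F : Finset G) : Finset G := {g ∈ F | ∀ h : H, (h : G) * g ∈ F}

lemma card_eq_card_mul_card_image_cosetRep {S : Finset G}
    (hS : ∀ h ∈ H, ∀ g ∈ S, h * g ∈ S) :
    #S = Fintype.card H * #(S.image (cosetRep H)) := by
  rw [Finset.card_eq_sum_card_image (cosetRep H), mul_comm, ← smul_eq_mul, ← Finset.sum_const]
  refine Finset.sum_congr rfl fun t ht => ?_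
  obtain ⟨g, hg, rfl⟩ := Finset.mem_image.mp ht
  have hinj : Function.Injective fun h : H => (h : G) * cosetRep H g :=
    fun h h' e => Subtype.ext (mul_right_cancel e)
  rw [← Finset.card_univ, ← Finset.card_image_of_injective _ hinj]
  congr 1
  ext x
  simp only [Finset.mem_filter, Finset.mem_image, Finset.mem_univ, true_and]
  constructor
  · rintro ⟨hx, hrep⟩
    refine ⟨⟨x * (cosetRep H x)⁻¹, mul_inv_cosetRep_mem H x⟩, ?_⟩
    simp [hrep]
  · rintro ⟨h, rfl⟩
    have hmem : (h : G) * cosetRep H g = ((h : G) * (cosetRep H g * g⁻¹)) * g := by group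
    refine ⟨hmem ▸ hS _ (H.mul_mem h.2 (cosetRep_mul_inv_mem H g)) g hg, ?_⟩
    rw [cosetRep_mul H h.2, cosetRep_cosetRep]

lemma card_cosetClosure (F : Finset G) :
    #(cosetClosure H F) = Fintype.card H * #(F.image (cosetRep H)) := by
  have hinv : ∀ h ∈ H, ∀ g ∈ cosetClosure H F, h * g ∈ cosetClosure H F := by
    simp only [cosetClosure, Finset.mem_biUnion, Finset.mem_image, Finset.mem_univ, true_and]
    rintro h hh _ ⟨h', f, hf, rfl⟩
    exact ⟨⟨h, hh⟩ * h', f, hf, by simp [mul_assoc]⟩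
  have himage : (cosetClosure H F).image (cosetRep H) = F.image (cosetRep H) := by
    ext t
    simp only [cosetClosure, Finset.mem_image, Finset.mem_biUnion, Finset.mem_univ, true_and]
    constructor
    · rintro ⟨_, ⟨h, f, hf, rfl⟩, rfl⟩
      exact ⟨f, hf, (cosetRep_mul H h.2 f).symm⟩
    · rintro ⟨f, hf, rfl⟩
      exact ⟨f, ⟨1, f, hf, one_mul f⟩, rfl⟩
  rw [card_eq_card_mul_card_image_cosetRep H hinv, himage]

lemma card_cosetInterior (F : Finset G) :
    #(cosetInterior H F) = Fintype.card H * #((cosetInterior H F).image (cosetRep H)) := by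
  refine card_eq_card_mul_card_image_cosetRep H fun h hh g hg => ?_
  simp only [cosetInterior, Finset.mem_filter] at hg ⊢
  refine ⟨hg.2 ⟨h, hh⟩, fun h' => ?_⟩
  simpa [mul_assoc] using hg.2 (h' * ⟨h, hh⟩)

lemma cosetClosure_sdiff_subset (F : Finset G) :
    cosetClosure H F \ F ⊆ leftBoundary (H : Set G).toFinset F := by
  intro x hx
  simp only [cosetClosure, leftBoundary, Finset.mem_sdiff, Finset.mem_biUnion, Finset.mem_univ,
    true_and, Set.mem_toFinset, SetLike.mem_coe] at hx ⊢
  obtain ⟨⟨h, hxh⟩, hxF⟩ := hx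
  exact ⟨h, h.2, Finset.mem_symmDiff.mpr (Or.inl ⟨hxh, hxF⟩)⟩

lemma sdiff_cosetInterior_subset (F : Finset G) :
    F \ cosetInterior H F ⊆ leftBoundary (H : Set G).toFinset F := by
  intro x hx
  simp only [cosetInterior, leftBoundary, Finset.mem_sdiff, Finset.mem_filter, Finset.mem_biUnion,
    Set.mem_toFinset, SetLike.mem_coe, not_and, not_forall] at hx ⊢
  obtain ⟨hxF, hx⟩ := hx
  obtain ⟨h, hhx⟩ := hx hxF
  refine ⟨(h : G)⁻¹, H.inv_mem h.2, Finset.mem_symmDiff.mpr (Or.inr ⟨hxF, fun hx' => hhx ?_⟩)⟩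
  obtain ⟨y, hy, rfl⟩ := Finset.mem_image.mp hx'
  simpa using hy

lemma card_cosetClosure_le (F : Finset G) :
    #(cosetClosure H F) ≤ #F + #(leftBoundary (H : Set G).toFinset F) := by
  calc #(cosetClosure H F) ≤ #(cosetClosure H F \ F) + #F := Finset.card_le_card_sdiff_add_card
    _ ≤ #F + #(leftBoundary (H : Set G).toFinset F) := by
      rw [add_comm]; gcongr; exact cosetClosure_sdiff_subset H F

lemma card_le_card_cosetInterior_add (F : Finset G) :
    #F ≤ #(cosetInterior H F) + #(leftBoundary (H : Set G).toFinset F) := by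
  calc #F ≤ #(F \ cosetInterior H F) + #(cosetInterior H F) := Finset.card_le_card_sdiff_add_card
    _ ≤ #(cosetInterior H F) + #(leftBoundary (H : Set G).toFinset F) := by
      rw [add_comm]; gcongr; exact sdiff_cosetInterior_subset H F

end Counting

section Language

variable [Group G] (H : Subgroup G) {A : Type*}

noncomputable def cosetGlue (Z : G → H → A) : G → A :=
  fun g => Z (cosetRep H g) ⟨g * (cosetRep H g)⁻¹, mul_inv_cosetRep_mem H g⟩

lemma cosetGlue_mul_of_cosetRep_eq (Z : G → H → A) (h : H) {t : G} (ht : cosetRep H t = t) :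
    cosetGlue H Z (h * t) = Z t h := by
  have hrep : cosetRep H (h * t) = t := by rw [cosetRep_mul H h.2, ht]
  simp only [cosetGlue, hrep]
  congr 1
  ext
  simp

lemma cosetGlue_mem_freeExt {Y : Set (H → A)} (hY : ∀ h₀ : H, ∀ y ∈ Y, shift h₀ y ∈ Y)
    {Z : G → H → A} (hZ : ∀ g, Z g ∈ Y) : cosetGlue H Z ∈ freeExt H Y := by
  intro g
  convert hY ⟨g * (cosetRep H g)⁻¹, mul_inv_cosetRep_mem H g⟩ _ (hZ (cosetRep H g)) using 2 with h
  simp only [cosetGlue, cosetRep_mul H h.2]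
  congr 1
  ext
  simp [mul_assoc]

lemma cosetRep_eq_of_mem_image [DecidableEq G] {S : Finset G} {t : G}
    (ht : t ∈ S.image (cosetRep H)) : cosetRep H t = t := by
  obtain ⟨g, -, rfl⟩ := Finset.mem_image.mp ht
  exact cosetRep_cosetRep H g

lemma mul_mem_of_mem_image_cosetInterior [DecidableEq G] [Fintype H] {F : Finset G} {t : G}
    (ht : t ∈ (cosetInterior H F).image (cosetRep H)) (h : H) : (h : G) * t ∈ F := by
  obtain ⟨g, hg, rfl⟩ := Finset.mem_image.mp ht
  have hmul : (h : G) * cosetRep H g = ((h : G) * (cosetRep H g * g⁻¹)) * g := by group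
  rw [hmul]
  exact (Finset.mem_filter.mp hg).2 ⟨_, H.mul_mem h.2 (cosetRep_mul_inv_mem H g)⟩

variable [DecidableEq G] [Finite A] (Y : Set (H → A))

lemma langCard_freeExt_le [Finite H] (F : Finset G) :
    langCard (freeExt H Y) F ≤ Y.ncard ^ #(F.image (cosetRep H)) := by
  set C := F.image (cosetRep H)
  let ψ : (C → Y) → F → A := fun z a =>
    (z ⟨cosetRep H a, Finset.mem_image_of_mem _ a.2⟩ : H → A)
      ⟨a * (cosetRep H a)⁻¹, mul_inv_cosetRep_mem H a⟩
  have hsub : language (freeExt H Y) F ⊆ Set.range ψ := by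
    rintro _ ⟨x, hx, rfl⟩
    exact ⟨fun t => ⟨fun h => x (h * t), hx t⟩, funext fun a => by simp [ψ, restrictF]⟩
  calc langCard (freeExt H Y) F ≤ Nat.card (Set.range ψ) := by
        rw [Nat.card_coe_set_eq]; exact Set.ncard_le_ncard hsub
    _ ≤ Nat.card (C → Y) := Finite.card_range_le ψ
    _ = Y.ncard ^ #C := by rw [Nat.card_fun, Nat.card_coe_set_eq, Nat.card_eq_finsetCard]

lemma pow_le_langCard_freeExt [Fintype H] (hYne : Y.Nonempty)
    (hY : ∀ h₀ : H, ∀ y ∈ Y, shift h₀ y ∈ Y) (F : Finset G) :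
    Y.ncard ^ #((cosetInterior H F).image (cosetRep H)) ≤ langCard (freeExt H Y) F := by
  obtain ⟨y₀, hy₀⟩ := hYne
  set C := (cosetInterior H F).image (cosetRep H)
  let Z : (C → Y) → G → H → A := fun z g => if hg : g ∈ C then z ⟨g, hg⟩ else y₀
  have hZ : ∀ z g, Z z g ∈ Y := fun z g => by
    by_cases hg : g ∈ C <;> simp [Z, hg, hy₀]
  let χ : (C → Y) → language (freeExt H Y) F := fun z =>
    ⟨restrictF F (cosetGlue H (Z z)), _, cosetGlue_mem_freeExt H hY (hZ z), rfl⟩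
  have hχ : Function.Injective χ := by
    intro z z' hzz
    funext t
    ext h
    have := congrFun (congrArg Subtype.val hzz) ⟨h * t, mul_mem_of_mem_image_cosetInterior H t.2 h⟩
    simpa [χ, Z, restrictF, cosetGlue_mul_of_cosetRep_eq H _ h (cosetRep_eq_of_mem_image H t.2)]
      using this
  calc Y.ncard ^ #C = Nat.card (C → Y) := by
        rw [Nat.card_fun, Nat.card_coe_set_eq, Nat.card_eq_finsetCard]
    _ ≤ Nat.card (language (freeExt H Y) F) := Nat.card_le_card_of_injective χ hχ
    _ = langCard (freeExt H Y) F := Nat.card_coe_set_eq _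

end Language

lemma tendsto_div_of_abs_mul_sub_le {L B S : ℕ → ℝ} {k c : ℝ} (hk : 0 < k) (hB : ∀ n, 0 < B n)
    (hS : Tendsto (fun n => S n / B n) atTop (𝓝 0)) (h : ∀ n, |k * L n - c * B n| ≤ c * S n) :
    Tendsto (fun n => L n / B n) atTop (𝓝 (c / k)) := by
  rw [tendsto_iff_norm_sub_tendsto_zero]
  have hlim : Tendsto (fun n => c / k * (S n / B n)) atTop (𝓝 0) := by
    simpa using hS.const_mul (c / k)
  refine squeeze_zero (fun n => norm_nonneg _) (fun n => ?_) hlim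
  have hkB : 0 < k * B n := mul_pos hk (hB n)
  calc ‖L n / B n - c / k‖ = |k * L n - c * B n| / (k * B n) := by
        rw [Real.norm_eq_abs, div_sub_div _ _ (hB n).ne' hk.ne', abs_div,
          abs_of_pos (mul_pos (hB n) hk)]
        ring_nf
    _ ≤ c * S n / (k * B n) := by gcongr; exact h n
    _ = c / k * (S n / B n) := by field_simp

section Entropy

variable [Group G] [DecidableEq G] (H : Subgroup G) [Fintype H] {A : Type*} [Finite A]
  (Y : Set (H → A))

lemma abs_card_mul_log_langCard_freeExt_sub_le (hYne : Y.Nonempty)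
    (hY : ∀ h₀ : H, ∀ y ∈ Y, shift h₀ y ∈ Y) (F : Finset G) :
    |Fintype.card H * Real.log (langCard (freeExt H Y) F) - Real.log Y.ncard * #F|
      ≤ Real.log Y.ncard * #(leftBoundary (H : Set G).toFinset F) := by
  have hm : (0 : ℝ) < Y.ncard := by exact_mod_cast (Set.ncard_pos).mpr hYne
  have hlogm : 0 ≤ Real.log Y.ncard := Real.log_nonneg (by exact_mod_cast hm)
  have hlow : (Y.ncard : ℝ) ^ #((cosetInterior H F).image (cosetRep H))
      ≤ langCard (freeExt H Y) F := by
    exact_mod_cast pow_le_langCard_freeExt H Y hYne hY F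
  have hup : (langCard (freeExt H Y) F : ℝ) ≤ (Y.ncard : ℝ) ^ #(F.image (cosetRep H)) := by
    exact_mod_cast langCard_freeExt_le H Y F
  have hlog_low := Real.log_le_log (pow_pos hm _) hlow
  have hlog_up := Real.log_le_log ((pow_pos hm _).trans_le hlow) hup
  rw [Real.log_pow] at hlog_low hlog_up
  have hclosure : Fintype.card H * Real.log (langCard (freeExt H Y) F)
      ≤ Real.log Y.ncard * #(cosetClosure H F) := by
    rw [card_cosetClosure]
    push_cast
    nlinarith
  have hinterior : Real.log Y.ncard * #(cosetInterior H F)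
      ≤ Fintype.card H * Real.log (langCard (freeExt H Y) F) := by
    rw [card_cosetInterior]
    push_cast
    nlinarith
  have hcl : (#(cosetClosure H F) : ℝ) ≤ #F + #(leftBoundary (H : Set G).toFinset F) := by
    exact_mod_cast card_cosetClosure_le H F
  have hin : (#F : ℝ) ≤ #(cosetInterior H F) + #(leftBoundary (H : Set G).toFinset F) := by
    exact_mod_cast card_le_card_cosetInterior_add H F
  have := mul_le_mul_of_nonneg_left hcl hlogm
  have := mul_le_mul_of_nonneg_left hin hlogm
  rw [abs_le]
  constructor <;> linarith

end Entropy

theorem tendsto_log_langCard_freeExt_div [Group G] [DecidableEq G] (H : Subgroup G) [Finite H]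
    {A : Type*} [Finite A] (Y : Set (H → A)) (hYne : Y.Nonempty)
    (hY : ∀ h₀ : H, ∀ y ∈ Y, shift h₀ y ∈ Y) {F : ℕ → Finset G} (hF : IsFolner F) :
    Tendsto (fun n => Real.log (langCard (freeExt H Y) (F n)) / #(F n)) atTop
      (𝓝 (Real.log Y.ncard / Nat.card H)) := by
  have := Fintype.ofFinite H
  rw [Nat.card_eq_fintype_card]
  exact tendsto_div_of_abs_mul_sub_le (by exact_mod_cast Fintype.card_pos)
    (fun n => by exact_mod_cast (hF.1 n).card_pos)
    (hF.tendsto_card_leftBoundary_div (H : Set G).toFinset)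
    (fun n => abs_card_mul_log_langCard_freeExt_sub_le H Y hYne hY (F n))

section SFT

variable [Group G] {A : Type*}

lemma IsSFT.exists_eq_freeExt {X : Set (G → A)} (hX : IsSFT X) :
    ∃ (S : Finset G) (Y : Set (Subgroup.closure (S : Set G) → A)),
      (∀ h₀, ∀ y ∈ Y, shift h₀ y ∈ Y) ∧ X = freeExt (Subgroup.closure (S : Set G)) Y := by
  obtain ⟨S, P, rfl⟩ := hX
  let ι : S → Subgroup.closure (S : Set G) := fun f => ⟨f, Subgroup.subset_closure f.2⟩
  refine ⟨S, {y | ∀ h₀, (fun f => y (ι f * h₀)) ∉ P}, fun h₀ y hy h₁ => ?_, ?_⟩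
  · simpa [shift, mul_assoc] using hy (h₁ * h₀)
  · ext x
    change (∀ g, (fun f : S => x (f * g)) ∉ P) ↔ ∀ g h₀, (fun f => x ((ι f * h₀ : _) * g)) ∉ P
    constructor
    · intro hx g h₀
      simpa [ι, mul_assoc] using hx (h₀ * g)
    · intro hx g
      simpa [ι] using hx g 1

lemma isSFT_freeExt (H : Subgroup G) [Finite H] (Y : Set (H → A)) : IsSFT (freeExt H Y) := by
  refine ⟨(Set.toFinite (H : Set G)).toFinset, {w | (fun h : H => w ⟨h, by simp⟩) ∉ Y}, ?_⟩
  ext x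
  simp [freeExt, restrictF, shift]

end SFT

theorem SFT_entropies_of_locallyFinite_general [Group G] (hLF : IsLocallyFinite G)
    (F : ℕ → Finset G) (hF : IsFolner F) (r : ℝ) :
    (∃ (A : Type) (_ : Fintype A) (_ : Nonempty A) (X : Set (G → A)),
        IsSFT X ∧ X.Nonempty ∧
        Filter.Tendsto (fun n => Real.log (langCard X (F n)) / ((F n).card : ℝ))
          Filter.atTop (nhds r))
      ↔ (∃ (H : Subgroup G), Finite ↥H ∧ ∃ n : ℕ, 1 ≤ n ∧
          r = Real.log n / (Nat.card ↥H : ℝ)) := by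
  classical
  constructor
  · rintro ⟨A, _, _, X, hX, ⟨x, hx⟩, hlim⟩
    obtain ⟨S, Y, hY, rfl⟩ := hX.exists_eq_freeExt
    have := hLF S
    have hYne : Y.Nonempty := ⟨_, hx 1⟩
    exact ⟨_, hLF S, Y.ncard, (Set.ncard_pos).mpr hYne,
      tendsto_nhds_unique hlim (tendsto_log_langCard_freeExt_div _ Y hYne hY hF)⟩
  · rintro ⟨H, hH, n, hn, rfl⟩
    let Y := Set.range fun a : Fin n => fun _ : H => a
    have hYne : Y.Nonempty := ⟨_, ⟨0, hn⟩, rfl⟩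
    have hY : ∀ h₀ : H, ∀ y ∈ Y, shift h₀ y ∈ Y := by
      rintro h₀ _ ⟨a, rfl⟩
      exact ⟨a, rfl⟩
    have hYcard : Y.ncard = n := by
      simpa using Set.ncard_range_of_injective (fun a b e => congrFun e 1 : Function.Injective
        fun a : Fin n => fun _ : H => a)
    refine ⟨Fin n, inferInstance, ⟨⟨0, hn⟩⟩, freeExt H Y, isSFT_freeExt H Y,
      ⟨fun _ => ⟨0, hn⟩, fun g => ⟨⟨0, hn⟩, rfl⟩⟩, ?_⟩
    simpa [hYcard] using tendsto_log_langCard_freeExt_div H Y hYne hY hF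

/-- Over a countable locally finite group, the set of topological entropies of
nonempty `G`-SFTs is exactly `{ log n / |H| : H a finite subgroup of G, n ≥ 1 }`. -/
theorem SFT_entropies_of_locallyFinite [Group G] [Countable G] (hLF : IsLocallyFinite G)
    (F : ℕ → Finset G) (hF : IsFolner F) (r : ℝ) :
    (∃ (A : Type) (_ : Fintype A) (_ : Nonempty A) (X : Set (G → A)),
        IsSFT X ∧ X.Nonempty ∧
        Filter.Tendsto (fun n => Real.log (langCard X (F n)) / ((F n).card : ℝ))
          Filter.atTop (nhds r))
      ↔ (∃ (H : Subgroup G), Finite ↥H ∧ ∃ n : ℕ, 1 ≤ n ∧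
          r = Real.log n / (Nat.card ↥H : ℝ)) :=
  SFT_entropies_of_locallyFinite_general hLF F hF r

end LFPaper
end
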